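/- LLL existence criterion for covering arrays: let t, k, v, λ, N be positive integers with k ≥ t, v ≥ 2, and p = 1/v^t. If e · (C(k,t) - C(k-t,t)) · v^t · ∑_{i=0}^{λ-1} C(N,i) p^i (1-p)^{N-i} ≤ 1, then a CA_λ(N; t, k, v) exists. -/

import Mathlib

set_option maxHeartbeats 1000000

section LLLCore
open Finset


lemma exp_aux (d : ℕ) (hd : 1 ≤ d) : 1 ≤ Real.exp 1 * (1 - 1/((d:ℝ)+1))^d := by
  have hd0 : (0:ℝ) < d := by exact_mod_cast hd
  have h1 : (1 + 1/(d:ℝ)) ≤ Real.exp (1/(d:ℝ)) := by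
    have := Real.add_one_le_exp (1/(d:ℝ)); linarith
  have h2 : (1 + 1/(d:ℝ))^d ≤ Real.exp (1/(d:ℝ))^d :=
    pow_le_pow_left₀ (by positivity) h1 d
  have h3 : Real.exp (1/(d:ℝ))^d = Real.exp 1 := by
    rw [← Real.exp_nat_mul]
    congr 1
    field_simp
  have h4 : (1 - 1/((d:ℝ)+1)) = (d:ℝ)/((d:ℝ)+1) := by field_simp; ring
  have h5 : ((d:ℝ)/((d:ℝ)+1))^d * (1+1/(d:ℝ))^d = 1 := by
    rw [← mul_pow, show (d:ℝ)/((d:ℝ)+1)*(1+1/(d:ℝ)) = 1 by field_simp]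
    simp
  calc (1:ℝ) = ((d:ℝ)/((d:ℝ)+1))^d * (1+1/(d:ℝ))^d := h5.symm
    _ ≤ ((d:ℝ)/((d:ℝ)+1))^d * Real.exp 1 := by
        apply mul_le_mul_of_nonneg_left _ (by positivity)
        rw [← h3]; exact h2
    _ = Real.exp 1 * (1 - 1/((d:ℝ)+1))^d := by rw [h4]; ring

variable {Ω : Type*} [Fintype Ω] [DecidableEq Ω] {ι : Type*} [Fintype ι] [DecidableEq ι]

/-- the set of points avoiding all events in `S` -/
def LLLGood (A : ι → Finset Ω) (S : Finset ι) : Finset Ω :=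
  Finset.univ.filter (fun ω => ∀ j ∈ S, ω ∉ A j)

lemma LLLGood_anti (A : ι → Finset Ω) {S T : Finset ι} (h : S ⊆ T) :
    LLLGood A T ⊆ LLLGood A S := by
  intro ω hω
  simp only [LLLGood, mem_filter, mem_univ, true_and] at *
  exact fun j hj => hω j (h hj)

lemma LLLGood_insert (A : ι → Finset Ω) (a : ι) (S : Finset ι) :
    LLLGood A (insert a S) = LLLGood A S \ A a := by
  ext ω
  simp only [LLLGood, mem_filter, mem_univ, true_and, mem_sdiff, mem_insert]
  constructor
  · exact fun h => ⟨fun j hj => h j (Or.inr hj), h a (Or.inl rfl)⟩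
  · rintro ⟨h1, h2⟩ j (rfl | hj)
    · exact h2
    · exact h1 j hj

lemma LLLGood_insert_card (A : ι → Finset Ω) (a : ι) (S : Finset ι) :
    ((LLLGood A (insert a S)).card : ℝ) =
      (LLLGood A S).card - ((A a ∩ LLLGood A S)).card := by
  rw [LLLGood_insert]
  have h1 : LLLGood A S \ A a = LLLGood A S \ (LLLGood A S ∩ A a) := by
    rw [Finset.sdiff_inter_self_left]
  rw [h1, Finset.card_sdiff_of_subset (Finset.inter_subset_left)]
  rw [Nat.cast_sub (Finset.card_le_card Finset.inter_subset_left)]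
  rw [Finset.inter_comm]

theorem LLL_counting [Nonempty Ω] (A : ι → Finset Ω) (Γ : ι → Finset ι) (d : ℕ) (q : ℝ)
    (hq0 : 0 ≤ q) (hΓself : ∀ i, i ∈ Γ i) (hΓcard : ∀ i, (Γ i).card ≤ d + 1)
    (hq : ∀ i, ((A i).card : ℝ) ≤ q * Fintype.card Ω)
    (hind : ∀ i (S : Finset ι), (∀ j ∈ S, j ∉ Γ i) →
      (((A i ∩ LLLGood A S).card : ℝ)) * Fintype.card Ω = (A i).card * (LLLGood A S).card)
    (hlll : Real.exp 1 * q * (d + 1) ≤ 1) :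
    ∃ ω : Ω, ∀ i, ω ∉ A i := by
  have he : (2:ℝ) ≤ Real.exp 1 := by have := Real.add_one_le_exp (1:ℝ); linarith
  have hΩpos : (0:ℝ) < Fintype.card Ω := by
    have := Fintype.card_pos (α := Ω); exact_mod_cast this
  set x : ℝ := if d = 0 then q else Real.exp 1 * q with hxdef
  have hx0 : 0 ≤ x := by
    rw [hxdef]; split <;> positivity
  have hxlt1 : x < 1 := by
    rw [hxdef]; split
    · rename_i hd; rw [hd] at hlll; push_cast at hlll; nlinarith
    · rename_i hd
      have hd1 : (1:ℝ) ≤ (d:ℝ) := by exact_mod_cast Nat.one_le_iff_ne_zero.mpr hd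
      nlinarith
  have hqx : q ≤ x := by
    rw [hxdef]; split
    · exact le_refl q
    · nlinarith
  have hkey : q ≤ x * (1-x)^d := by
    rcases Nat.eq_zero_or_pos d with hd | hd
    · subst hd; simp [hxdef]
    · have hd' : (1:ℝ) ≤ (d:ℝ) := by exact_mod_cast hd
      have hxe : x = Real.exp 1 * q := by rw [hxdef, if_neg (Nat.pos_iff_ne_zero.mp hd)]
      have hxle : x ≤ 1/((d:ℝ)+1) := by
        rw [le_div_iff₀ (by linarith)]
        rw [hxe]; linarith [hlll]
      have h1 : 1 - 1/((d:ℝ)+1) ≤ 1 - x := by linarith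
      have h0 : (0:ℝ) ≤ 1 - 1/((d:ℝ)+1) := by
        have : 1/((d:ℝ)+1) ≤ 1 := by rw [div_le_one (by linarith)]; linarith
        linarith
      have hpow : (1 - 1/((d:ℝ)+1))^d ≤ (1-x)^d := pow_le_pow_left₀ h0 h1 d
      have haux := exp_aux d hd
      calc q = q * 1 := by ring
        _ ≤ q * (Real.exp 1 * (1 - 1/((d:ℝ)+1))^d) := by
            exact mul_le_mul_of_nonneg_left haux hq0
        _ = (Real.exp 1 * q) * (1 - 1/((d:ℝ)+1))^d := by ring
        _ ≤ (Real.exp 1 * q) * (1-x)^d := by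
            apply mul_le_mul_of_nonneg_left hpow (by positivity)
        _ = x * (1-x)^d := by rw [hxe]
  have h1x0 : (0:ℝ) ≤ 1 - x := by linarith
  have h1x1 : 1 - x ≤ 1 := by linarith
  -- main claim
  have claimA : ∀ S : Finset ι, ∀ i ∉ S,
      ((A i ∩ LLLGood A S).card : ℝ) ≤ x * (LLLGood A S).card := by
    intro S
    induction S using Finset.strongInductionOn with
    | _ S IH =>
      intro i hiS
      set S1 := S ∩ Γ i with hS1def
      set S2 := S \ Γ i with hS2def
      have hS2S : S2 ⊆ S := Finset.sdiff_subset
      have hS1S : S1 ⊆ S := Finset.inter_subset_left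
      have hS1d : S1.card ≤ d := by
        have hsub : S1 ⊆ (Γ i).erase i := by
          intro j hj
          rw [Finset.mem_erase]
          refine ⟨?_, (Finset.mem_inter.mp hj).2⟩
          rintro rfl; exact hiS (Finset.mem_inter.mp hj).1
        have := Finset.card_le_card hsub
        rw [Finset.card_erase_of_mem (hΓself i)] at this
        have := hΓcard i
        omega
      -- subclaim
      have hsub : ∀ T, T ⊆ S1 →
          (1-x)^T.card * ((LLLGood A S2).card:ℝ) ≤ (LLLGood A (S2 ∪ T)).card := by
        intro T
        induction T using Finset.induction_on with
        | empty => intro _; simp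
        | insert _ _ ha IH2 =>
          rename_i a T
          intro hins
          have hT : T ⊆ S1 := (Finset.subset_insert a T).trans hins
          have haS1 : a ∈ S1 := hins (Finset.mem_insert_self a T)
          have haΓ : a ∈ Γ i := (Finset.mem_inter.mp haS1).2
          have haS : a ∈ S := (Finset.mem_inter.mp haS1).1
          have haW : a ∉ S2 ∪ T := by
            rw [Finset.mem_union]
            rintro (h | h)
            · exact (Finset.mem_sdiff.mp h).2 haΓ
            · exact ha h
          have hWS : S2 ∪ T ⊂ S := by
            refine Finset.ssubset_iff_of_subset ?_ |>.mpr ⟨a, haS, haW⟩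
            exact Finset.union_subset hS2S (hT.trans hS1S)
          have hA := IH (S2 ∪ T) hWS a haW
          have hcard := LLLGood_insert_card A a (S2 ∪ T)
          have hrw : S2 ∪ insert a T = insert a (S2 ∪ T) := by
            rw [Finset.union_insert]
          rw [hrw, hcard, Finset.card_insert_of_notMem ha, pow_succ]
          have hIH2 := IH2 hT
          have hstep : (1-x) * ((1-x)^T.card * ((LLLGood A S2).card:ℝ)) ≤
              (1-x) * ((LLLGood A (S2 ∪ T)).card:ℝ) :=
            mul_le_mul_of_nonneg_left hIH2 h1x0
          calc (1-x)^T.card * (1-x) * ((LLLGood A S2).card:ℝ)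
              = (1-x) * ((1-x)^T.card * ((LLLGood A S2).card:ℝ)) := by ring
            _ ≤ (1-x) * ((LLLGood A (S2 ∪ T)).card:ℝ) := hstep
            _ = ((LLLGood A (S2 ∪ T)).card:ℝ) - x * ((LLLGood A (S2 ∪ T)).card:ℝ) := by ring
            _ ≤ ((LLLGood A (S2 ∪ T)).card:ℝ) - ((A a ∩ LLLGood A (S2 ∪ T)).card:ℝ) := by
                linarith
      -- numerator
      have hnum : ((A i ∩ LLLGood A S).card:ℝ) ≤ ((A i ∩ LLLGood A S2).card:ℝ) := by
        exact_mod_cast Finset.card_le_card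
          (Finset.inter_subset_inter (Finset.Subset.refl _) (LLLGood_anti A hS2S))
      have hind2 := hind i S2 (fun j hj => (Finset.mem_sdiff.mp hj).2)
      have hg2 : (0:ℝ) ≤ ((LLLGood A S2).card:ℝ) := by positivity
      have hnum2 : ((A i ∩ LLLGood A S2).card:ℝ) ≤ q * (LLLGood A S2).card := by
        refine le_of_mul_le_mul_right ?_ hΩpos
        rw [hind2]
        calc ((A i).card:ℝ) * (LLLGood A S2).card
            ≤ (q * Fintype.card Ω) * (LLLGood A S2).card :=
              mul_le_mul_of_nonneg_right (hq i) hg2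
          _ = q * (LLLGood A S2).card * Fintype.card Ω := by ring
      have hden : (1-x)^S1.card * ((LLLGood A S2).card:ℝ) ≤ (LLLGood A S).card := by
        have := hsub S1 (le_refl _)
        rwa [hS2def, hS1def, Finset.sdiff_union_inter] at this
      have hpow2 : (1-x)^d ≤ (1-x)^S1.card := pow_le_pow_of_le_one h1x0 h1x1 hS1d
      calc ((A i ∩ LLLGood A S).card:ℝ) ≤ ((A i ∩ LLLGood A S2).card:ℝ) := hnum
        _ ≤ q * (LLLGood A S2).card := hnum2
        _ ≤ (x * (1-x)^d) * (LLLGood A S2).card := mul_le_mul_of_nonneg_right hkey hg2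
        _ ≤ (x * (1-x)^S1.card) * (LLLGood A S2).card := by
            apply mul_le_mul_of_nonneg_right _ hg2
            exact mul_le_mul_of_nonneg_left hpow2 hx0
        _ = x * ((1-x)^S1.card * (LLLGood A S2).card) := by ring
        _ ≤ x * (LLLGood A S).card := mul_le_mul_of_nonneg_left hden hx0
  -- positivity
  have claimB : ∀ S : Finset ι, (1-x)^S.card * (Fintype.card Ω : ℝ) ≤ (LLLGood A S).card := by
    intro S
    induction S using Finset.induction_on with
    | empty => simp [LLLGood]
    | insert _ _ ha IH =>
      rename_i a S
      have hA := claimA S a ha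
      have hcard := LLLGood_insert_card A a S
      rw [Finset.card_insert_of_notMem ha, pow_succ, hcard]
      have hstep : (1-x) * ((1-x)^S.card * (Fintype.card Ω:ℝ)) ≤
          (1-x) * ((LLLGood A S).card:ℝ) := mul_le_mul_of_nonneg_left IH h1x0
      calc (1-x)^S.card * (1-x) * (Fintype.card Ω:ℝ)
          = (1-x) * ((1-x)^S.card * (Fintype.card Ω:ℝ)) := by ring
        _ ≤ (1-x) * ((LLLGood A S).card:ℝ) := hstep
        _ = ((LLLGood A S).card:ℝ) - x * ((LLLGood A S).card:ℝ) := by ring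
        _ ≤ ((LLLGood A S).card:ℝ) - ((A a ∩ LLLGood A S).card:ℝ) := by linarith
  have hfinal : (0:ℝ) < (LLLGood A Finset.univ).card := by
    have := claimB Finset.univ
    have hp : (0:ℝ) < (1-x)^(Finset.univ : Finset ι).card * (Fintype.card Ω:ℝ) := by
      apply mul_pos (pow_pos (by linarith) _) hΩpos
    linarith
  have hne : (LLLGood A Finset.univ).Nonempty := by
    rw [← Finset.card_pos]; exact_mod_cast hfinal
  obtain ⟨ω, hω⟩ := hne
  refine ⟨ω, fun i => ?_⟩
  simp only [LLLGood, Finset.mem_filter] at hω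
  exact hω.2 i (Finset.mem_univ i)

end LLLCore



section Cylinder

lemma cylinder_indep {N k v : ℕ} (u : Finset (Fin k)) (E F : Finset (Fin N → Fin k → Fin v))
    (hE : ∀ ω ω' : Fin N → Fin k → Fin v,
      (∀ r j, j ∈ u → ω r j = ω' r j) → ω ∈ E → ω' ∈ E)
    (hF : ∀ ω ω' : Fin N → Fin k → Fin v,
      (∀ r j, j ∉ u → ω r j = ω' r j) → ω ∈ F → ω' ∈ F) :
    (E ∩ F).card * Fintype.card (Fin N → Fin k → Fin v) = E.card * F.card := by
  classical
  set X := Fin N → {j : Fin k // j ∈ u} → Fin v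
  set Y := Fin N → {j : Fin k // ¬ j ∈ u} → Fin v
  let e : (Fin N → Fin k → Fin v) ≃ X × Y :=
    (Equiv.piCongrRight (fun _ => Equiv.piEquivPiSubtypeProd (· ∈ u) (fun _ => Fin v))).trans
      (Equiv.arrowProdEquivProdArrow _ _ _)
  have he1 : ∀ ω r (j : {j : Fin k // j ∈ u}), (e ω).1 r j = ω r j.1 := fun _ _ _ => rfl
  have he2 : ∀ ω r (j : {j : Fin k // ¬ j ∈ u}), (e ω).2 r j = ω r j.1 := fun _ _ _ => rfl
  set E1 : Finset X := (E.image e).image Prod.fst with hE1def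
  set F2 : Finset Y := (F.image e).image Prod.snd with hF2def
  have hEprod : E.image e = E1 ×ˢ (Finset.univ : Finset Y) := by
    ext pq
    obtain ⟨a, b⟩ := pq
    simp only [Finset.mem_product, Finset.mem_univ, and_true, hE1def, Finset.mem_image]
    constructor
    · rintro ⟨ω, hω, hωe⟩
      exact ⟨(a, b), ⟨ω, hω, hωe⟩, rfl⟩
    · rintro ⟨⟨a', b'⟩, ⟨ω₀, hω₀, hω₀e⟩, hfst⟩
      refine ⟨e.symm (a, b), ?_, by simp⟩
      apply hE ω₀ (e.symm (a, b)) _ hω₀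
      intro r j hj
      have h1 : (e ω₀).1 = a := by rw [hω₀e]; exact hfst
      have h2 : (e (e.symm (a, b))).1 = a := by simp
      calc ω₀ r j = (e ω₀).1 r ⟨j, hj⟩ := (he1 ω₀ r ⟨j, hj⟩).symm
        _ = a r ⟨j, hj⟩ := by rw [h1]
        _ = (e (e.symm (a, b))).1 r ⟨j, hj⟩ := by rw [h2]
        _ = e.symm (a, b) r j := he1 _ r ⟨j, hj⟩
  have hFprod : F.image e = (Finset.univ : Finset X) ×ˢ F2 := by
    ext pq
    obtain ⟨a, b⟩ := pq
    simp only [Finset.mem_product, Finset.mem_univ, true_and, hF2def, Finset.mem_image]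
    constructor
    · rintro ⟨ω, hω, hωe⟩
      exact ⟨(a, b), ⟨ω, hω, hωe⟩, rfl⟩
    · rintro ⟨⟨a', b'⟩, ⟨ω₀, hω₀, hω₀e⟩, hsnd⟩
      refine ⟨e.symm (a, b), ?_, by simp⟩
      apply hF ω₀ (e.symm (a, b)) _ hω₀
      intro r j hj
      have h1 : (e ω₀).2 = b := by rw [hω₀e]; exact hsnd
      have h2 : (e (e.symm (a, b))).2 = b := by simp
      calc ω₀ r j = (e ω₀).2 r ⟨j, hj⟩ := (he2 ω₀ r ⟨j, hj⟩).symm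
        _ = b r ⟨j, hj⟩ := by rw [h1]
        _ = (e (e.symm (a, b))).2 r ⟨j, hj⟩ := by rw [h2]
        _ = e.symm (a, b) r j := he2 _ r ⟨j, hj⟩
  have hinter : (E ∩ F).image e = E1 ×ˢ F2 := by
    rw [Finset.image_inter _ _ e.injective, hEprod, hFprod]
    ext pq
    obtain ⟨a, b⟩ := pq
    simp [Finset.mem_product]
  have hcardEF : (E ∩ F).card = E1.card * F2.card := by
    rw [← Finset.card_image_of_injective (E ∩ F) e.injective, hinter, Finset.card_product]
  have hcardE : E.card = E1.card * Fintype.card Y := by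
    rw [← Finset.card_image_of_injective E e.injective, hEprod, Finset.card_product,
      Finset.card_univ]
  have hcardF : F.card = Fintype.card X * F2.card := by
    rw [← Finset.card_image_of_injective F e.injective, hFprod, Finset.card_product,
      Finset.card_univ]
  have hcardΩ : Fintype.card (Fin N → Fin k → Fin v) = Fintype.card X * Fintype.card Y := by
    rw [Fintype.card_congr e, Fintype.card_prod]
  rw [hcardEF, hcardE, hcardF, hcardΩ]
  ring

end Cylinder



section Counting

variable {N t k v : ℕ}

/-- rows matching the tuple `x` on columns `s₀` -/
def MatchRow (s₀ : Fin t → Fin k) (x : Fin t → Fin v) : Finset (Fin k → Fin v) :=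
  Finset.univ.filter (fun row => ∀ i, row (s₀ i) = x i)

lemma card_matchRow (s₀ : Fin t → Fin k) (x : Fin t → Fin v)
    (hs₀ : Function.Injective s₀) : (MatchRow s₀ x).card = v ^ (k - t) := by
  classical
  have hH : MatchRow s₀ x =
      Fintype.piFinset (fun j => Finset.univ.filter (fun a : Fin v => ∀ i, s₀ i = j → a = x i)) := by
    ext row
    simp only [MatchRow, Finset.mem_filter, Finset.mem_univ, true_and, Fintype.mem_piFinset]
    constructor
    · rintro h j i rfl; exact h i
    · intro h i; exact h (s₀ i) i rfl
  rw [hH, Fintype.card_piFinset]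
  have hcard : ∀ j : Fin k,
      (Finset.univ.filter (fun a : Fin v => ∀ i, s₀ i = j → a = x i)).card =
        if j ∈ Finset.image s₀ Finset.univ then 1 else v := by
    intro j
    split
    · rename_i hj
      obtain ⟨i₀, -, rfl⟩ := Finset.mem_image.mp hj
      have : (Finset.univ.filter (fun a : Fin v => ∀ i, s₀ i = s₀ i₀ → a = x i)) = {x i₀} := by
        ext a
        simp only [Finset.mem_filter, Finset.mem_univ, true_and, Finset.mem_singleton]
        constructor
        · intro h; exact h i₀ rfl
        · rintro rfl i hi; rw [hs₀ hi]
      rw [this, Finset.card_singleton]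
    · rename_i hj
      have : (Finset.univ.filter (fun a : Fin v => ∀ i, s₀ i = j → a = x i)) = Finset.univ := by
        ext a
        simp only [Finset.mem_filter, Finset.mem_univ, true_and, iff_true]
        intro i hi
        exact absurd (Finset.mem_image.mpr ⟨i, Finset.mem_univ i, hi⟩) hj
      rw [this, Finset.card_univ, Fintype.card_fin]
  calc ∏ j, (Finset.univ.filter (fun a : Fin v => ∀ i, s₀ i = j → a = x i)).card
      = ∏ j, if j ∈ Finset.image s₀ Finset.univ then 1 else v := by
        exact Finset.prod_congr rfl (fun j _ => hcard j)
    _ = v ^ (k - t) := by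
        rw [← Finset.prod_sdiff (Finset.subset_univ (Finset.image s₀ Finset.univ))]
        have h1 : ∀ j ∈ Finset.image s₀ Finset.univ,
            (if j ∈ Finset.image s₀ Finset.univ then 1 else v) = 1 := by
          intro j hj; rw [if_pos hj]
        have h2 : ∀ j ∈ Finset.univ \ Finset.image s₀ Finset.univ,
            (if j ∈ Finset.image s₀ Finset.univ then 1 else v) = v := by
          intro j hj; rw [if_neg (Finset.mem_sdiff.mp hj).2]
        rw [Finset.prod_congr rfl h1, Finset.prod_congr rfl h2, Finset.prod_const,
          Finset.prod_const_one, mul_one, Finset.card_sdiff_of_subset (Finset.subset_univ _),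
          Finset.card_univ, Fintype.card_fin, Finset.card_image_of_injective _ hs₀,
          Finset.card_univ, Fintype.card_fin]

lemma card_matchRow_compl (s₀ : Fin t → Fin k) (x : Fin t → Fin v)
    (hs₀ : Function.Injective s₀) : ((MatchRow s₀ x)ᶜ).card = v ^ k - v ^ (k - t) := by
  rw [Finset.card_compl, card_matchRow s₀ x hs₀]
  congr 1
  rw [Fintype.card_fun, Fintype.card_fin, Fintype.card_fin]

/-- arrays for which the tuple `x` is covered fewer than `lam` times on columns `s₀` -/
def BadTuple (s₀ : Fin t → Fin k) (x : Fin t → Fin v) (N lam : ℕ) :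
    Finset (Fin N → Fin k → Fin v) :=
  Finset.univ.filter (fun ω =>
    (Finset.univ.filter (fun r : Fin N => ∀ i, ω r (s₀ i) = x i)).card < lam)

lemma card_fixedMatch (s₀ : Fin t → Fin k) (x : Fin t → Fin v) (R : Finset (Fin N)) :
    (Finset.univ.filter (fun ω : Fin N → Fin k → Fin v =>
        Finset.univ.filter (fun r : Fin N => ∀ i, ω r (s₀ i) = x i) = R)).card =
      (MatchRow s₀ x).card ^ R.card * ((MatchRow s₀ x)ᶜ).card ^ (N - R.card) := by
  classical
  have hH : (Finset.univ.filter (fun ω : Fin N → Fin k → Fin v =>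
        Finset.univ.filter (fun r : Fin N => ∀ i, ω r (s₀ i) = x i) = R)) =
      Fintype.piFinset (fun r => if r ∈ R then MatchRow s₀ x else (MatchRow s₀ x)ᶜ) := by
    ext ω
    simp only [Finset.mem_filter, Finset.mem_univ, true_and, Fintype.mem_piFinset,
      Finset.ext_iff]
    constructor
    · intro h r
      have := h r
      by_cases hr : r ∈ R
      · rw [if_pos hr]
        simp only [MatchRow, Finset.mem_filter, Finset.mem_univ, true_and]
        exact this.mpr hr
      · rw [if_neg hr]
        simp only [Finset.mem_compl, MatchRow, Finset.mem_filter, Finset.mem_univ, true_and]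
        exact fun hcon => hr (this.mp hcon)
    · intro h r
      have := h r
      by_cases hr : r ∈ R
      · rw [if_pos hr] at this
        simp only [MatchRow, Finset.mem_filter, Finset.mem_univ, true_and] at this
        exact ⟨fun _ => hr, fun _ => this⟩
      · rw [if_neg hr] at this
        simp only [Finset.mem_compl, MatchRow, Finset.mem_filter, Finset.mem_univ,
          true_and] at this
        exact ⟨fun hcon => absurd hcon this, fun hcon => absurd hcon hr⟩
  rw [hH, Fintype.card_piFinset]
  rw [← Finset.prod_sdiff (Finset.subset_univ R)]
  have h1 : ∀ r ∈ R, (if r ∈ R then MatchRow s₀ x else (MatchRow s₀ x)ᶜ).card =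
      (MatchRow s₀ x).card := fun r hr => by rw [if_pos hr]
  have h2 : ∀ r ∈ Finset.univ \ R,
      (if r ∈ R then MatchRow s₀ x else (MatchRow s₀ x)ᶜ).card = ((MatchRow s₀ x)ᶜ).card :=
    fun r hr => by rw [if_neg (Finset.mem_sdiff.mp hr).2]
  rw [Finset.prod_congr rfl h1, Finset.prod_congr rfl h2, Finset.prod_const,
    Finset.prod_const, Finset.card_sdiff_of_subset (Finset.subset_univ _), Finset.card_univ,
    Fintype.card_fin]
  ring

lemma card_badTuple_le (s₀ : Fin t → Fin k) (x : Fin t → Fin v)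
    (hs₀ : Function.Injective s₀) (N lam : ℕ) :
    (BadTuple s₀ x N lam).card ≤
      ∑ m ∈ Finset.range lam,
        N.choose m * (v ^ (k - t)) ^ m * (v ^ k - v ^ (k - t)) ^ (N - m) := by
  classical
  have hsub : BadTuple s₀ x N lam ⊆
      (Finset.range lam).biUnion (fun m => (Finset.powersetCard m (Finset.univ : Finset (Fin N))).biUnion
        (fun R => Finset.univ.filter (fun ω : Fin N → Fin k → Fin v =>
          Finset.univ.filter (fun r : Fin N => ∀ i, ω r (s₀ i) = x i) = R))) := by
    intro ω hω
    simp only [BadTuple, Finset.mem_filter, Finset.mem_univ, true_and] at hω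
    rw [Finset.mem_biUnion]
    refine ⟨(Finset.univ.filter (fun r : Fin N => ∀ i, ω r (s₀ i) = x i)).card,
      Finset.mem_range.mpr hω, ?_⟩
    rw [Finset.mem_biUnion]
    exact ⟨_, Finset.mem_powersetCard.mpr ⟨Finset.subset_univ _, rfl⟩, by
      simp only [Finset.mem_filter, Finset.mem_univ, true_and]⟩
  calc (BadTuple s₀ x N lam).card ≤ _ := Finset.card_le_card hsub
    _ ≤ ∑ m ∈ Finset.range lam, ((Finset.powersetCard m (Finset.univ : Finset (Fin N))).biUnion
        (fun R => Finset.univ.filter (fun ω : Fin N → Fin k → Fin v =>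
          Finset.univ.filter (fun r : Fin N => ∀ i, ω r (s₀ i) = x i) = R))).card :=
      Finset.card_biUnion_le
    _ ≤ ∑ m ∈ Finset.range lam,
        N.choose m * (v ^ (k - t)) ^ m * (v ^ k - v ^ (k - t)) ^ (N - m) := by
      apply Finset.sum_le_sum
      intro m _
      calc ((Finset.powersetCard m (Finset.univ : Finset (Fin N))).biUnion _).card
          ≤ ∑ R ∈ Finset.powersetCard m (Finset.univ : Finset (Fin N)),
            (Finset.univ.filter (fun ω : Fin N → Fin k → Fin v =>
              Finset.univ.filter (fun r : Fin N => ∀ i, ω r (s₀ i) = x i) = R)).card :=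
          Finset.card_biUnion_le
        _ = ∑ R ∈ Finset.powersetCard m (Finset.univ : Finset (Fin N)),
            (v ^ (k - t)) ^ m * (v ^ k - v ^ (k - t)) ^ (N - m) := by
          apply Finset.sum_congr rfl
          intro R hR
          obtain ⟨-, hcard⟩ := Finset.mem_powersetCard.mp hR
          rw [card_fixedMatch s₀ x R, card_matchRow s₀ x hs₀, card_matchRow_compl s₀ x hs₀,
            hcard]
        _ = N.choose m * (v ^ (k - t)) ^ m * (v ^ k - v ^ (k - t)) ^ (N - m) := by
          rw [Finset.sum_const, Finset.card_powersetCard, Finset.card_univ, Fintype.card_fin,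
            smul_eq_mul, mul_assoc]

end Counting


lemma term_eq (v t k N m : ℕ) (hv : 1 ≤ v) (htk : t ≤ k) :
    ((N.choose m * (v ^ (k - t)) ^ m * (v ^ k - v ^ (k - t)) ^ (N - m) : ℕ) : ℝ) =
      (N.choose m : ℝ) * (1/(v:ℝ)^t)^m * (1 - 1/(v:ℝ)^t)^(N-m) * ((v:ℝ)^k)^N := by
  have hv1 : (1:ℝ) ≤ (v:ℝ) := by exact_mod_cast hv
  have hvt1 : (1:ℝ) ≤ (v:ℝ)^t := one_le_pow₀ hv1
  have hvt0 : ((v:ℝ)^t) ≠ 0 := by linarith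
  have hple : v ^ (k - t) ≤ v ^ k := Nat.pow_le_pow_right hv (Nat.sub_le k t)
  have hsplit : (v:ℝ)^k = (v:ℝ)^t * (v:ℝ)^(k-t) := by
    rw [← pow_add]
    congr 1
    omega
  rcases le_or_gt m N with hm | hm
  · obtain ⟨a, rfl⟩ : ∃ a, N = m + a := ⟨N - m, by omega⟩
    have hNm : m + a - m = a := by omega
    rw [hNm]
    push_cast [Nat.cast_sub hple]
    have hfac : ((v:ℝ)^k - (v:ℝ)^(k-t)) = (v:ℝ)^(k-t) * ((v:ℝ)^t - 1) := by
      rw [hsplit]; ring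
    rw [hfac, mul_pow]
    have h1p : (1 - 1/(v:ℝ)^t) = ((v:ℝ)^t - 1)/(v:ℝ)^t := by field_simp
    rw [h1p, div_pow, hsplit]
    generalize (v:ℝ)^t = w at *
    field_simp
    have hk : w^a * (w * w⁻¹ - w⁻¹)^a = (w-1)^a := by
      rw [← mul_pow, mul_sub, mul_inv_cancel₀ hvt0, mul_one]
    linear_combination (-((((m + a).choose m : ℕ) : ℝ) * (v:ℝ) ^ (m * (k - t)) *
      (v:ℝ) ^ (a * (k - t)) * w ^ m)) * hk
  · rw [Nat.choose_eq_zero_of_lt hm]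
    push_cast
    ring

lemma badTuple_card_real {t k v : ℕ} (s₀ : Fin t → Fin k) (x : Fin t → Fin v)
    (hs₀ : Function.Injective s₀) (N lam : ℕ) (hv : 1 ≤ v) (htk : t ≤ k) :
    ((BadTuple s₀ x N lam).card : ℝ) ≤
      (∑ i ∈ Finset.range lam,
        (N.choose i : ℝ) * (1/(v:ℝ)^t)^i * (1 - 1/(v:ℝ)^t)^(N-i)) * ((v:ℝ)^k)^N := by
  have h1 := card_badTuple_le s₀ x hs₀ N lam
  have h2 : ((BadTuple s₀ x N lam).card : ℝ) ≤
      ((∑ m ∈ Finset.range lam,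
        N.choose m * (v ^ (k - t)) ^ m * (v ^ k - v ^ (k - t)) ^ (N - m) : ℕ) : ℝ) := by
    exact_mod_cast h1
  refine h2.trans (le_of_eq ?_)
  rw [Nat.cast_sum, Finset.sum_mul]
  apply Finset.sum_congr rfl
  intro m _
  exact term_eq v t k N m hv htk

open Classical in
/-- the bad event for a set `c` of `t` columns -/
noncomputable def BadSet (N t k v lam : ℕ) (c : Finset (Fin k)) :
    Finset (Fin N → Fin k → Fin v) :=
  Finset.univ.filter (fun ω => ∃ s : Fin t → Fin k, Function.Injective s ∧ (∀ i, s i ∈ c) ∧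
    ∃ x : Fin t → Fin v,
      (Finset.univ.filter (fun r : Fin N => ∀ i, ω r (s i) = x i)).card < lam)

/-- canonical ordering of a `t`-set of columns -/
def s0 {k t : ℕ} (c : Finset (Fin k)) (hc : c.card = t) : Fin t → Fin k :=
  fun i => (c.orderIsoOfFin hc i : Fin k)

lemma s0_inj {k t : ℕ} (c : Finset (Fin k)) (hc : c.card = t) :
    Function.Injective (s0 c hc) :=
  fun a b hab => (c.orderIsoOfFin hc).injective (Subtype.ext hab)

lemma s0_surj {k t : ℕ} (c : Finset (Fin k)) (hc : c.card = t) {j : Fin k} (hj : j ∈ c) :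
    ∃ i, s0 c hc i = j := by
  obtain ⟨i, hi⟩ := (c.orderIsoOfFin hc).surjective ⟨j, hj⟩
  exact ⟨i, by rw [s0, hi]⟩

lemma reindex {t k : ℕ} {s s₀ : Fin t → Fin k} (hs : Function.Injective s)
    (h : ∀ i, ∃ j, s₀ j = s i) : ∃ σ : Equiv.Perm (Fin t), ∀ i, s₀ (σ i) = s i := by
  choose f hf using h
  have hfinj : Function.Injective f := fun a b hab => hs (by rw [← hf a, ← hf b, hab])
  exact ⟨Equiv.ofBijective f (Finite.injective_iff_bijective.mp hfinj), fun i => hf i⟩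

lemma badSet_subset {N t k v lam : ℕ} (c : Finset (Fin k)) (hc : c.card = t) :
    BadSet N t k v lam c ⊆
      Finset.univ.biUnion (fun x : Fin t → Fin v => BadTuple (s0 c hc) x N lam) := by
  intro ω hω
  simp only [BadSet, Finset.mem_filter, Finset.mem_univ, true_and] at hω
  obtain ⟨s, hsinj, hsc, x, hcount⟩ := hω
  obtain ⟨σ, hσ⟩ := reindex hsinj (fun i => s0_surj c hc (hsc i))
  rw [Finset.mem_biUnion]
  refine ⟨x ∘ σ.symm, Finset.mem_univ _, ?_⟩
  simp only [BadTuple, Finset.mem_filter, Finset.mem_univ, true_and]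
  have heq : (Finset.univ.filter (fun r : Fin N => ∀ j, ω r (s0 c hc j) = (x ∘ σ.symm) j)) =
      (Finset.univ.filter (fun r : Fin N => ∀ i, ω r (s i) = x i)) := by
    ext r
    simp only [Finset.mem_filter, Finset.mem_univ, true_and, Function.comp_apply]
    constructor
    · intro hr i
      have := hr (σ i)
      rwa [hσ i, Equiv.symm_apply_apply] at this
    · intro hr j
      have := hr (σ.symm j)
      rwa [← hσ (σ.symm j), Equiv.apply_symm_apply] at this
  rw [heq]
  exact hcount

lemma badSet_det {N t k v lam : ℕ} (c : Finset (Fin k)) (ω ω' : Fin N → Fin k → Fin v)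
    (hagree : ∀ r j, j ∈ c → ω r j = ω' r j) (hω : ω ∈ BadSet N t k v lam c) :
    ω' ∈ BadSet N t k v lam c := by
  simp only [BadSet, Finset.mem_filter, Finset.mem_univ, true_and] at *
  obtain ⟨s, hsinj, hsc, x, hcount⟩ := hω
  refine ⟨s, hsinj, hsc, x, ?_⟩
  have heq : (Finset.univ.filter (fun r : Fin N => ∀ i, ω' r (s i) = x i)) =
      (Finset.univ.filter (fun r : Fin N => ∀ i, ω r (s i) = x i)) := by
    ext r
    simp only [Finset.mem_filter, Finset.mem_univ, true_and]
    constructor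
    · intro hr i; rw [hagree r (s i) (hsc i)]; exact hr i
    · intro hr i; rw [← hagree r (s i) (hsc i)]; exact hr i
  rw [heq]
  exact hcount

/-- `A` is a covering array `CA_lam(N; t, k, v)`: an `N × k` array over a `v`-ary alphabet
such that for every set of `t` columns, every `t`-tuple of values appears in those columns
in at least `lam` rows. -/
def IsCA (N t k v lam : ℕ) (A : Fin N → Fin k → Fin v) : Prop :=
  ∀ s : Fin t → Fin k, Function.Injective s →
    ∀ x : Fin t → Fin v,
      lam ≤ (Finset.univ.filter (fun r : Fin N => ∀ i, A r (s i) = x i)).card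

/-- Lovász-local-lemma existence criterion: with `p = 1/v^t`, if
`e · (C(k,t) - C(k-t,t)) · v^t · ∑_{i=0}^{λ-1} C(N,i) p^i (1-p)^{N-i} ≤ 1`, then a
`CA_lam(N; t, k, v)` exists. -/
theorem lll_existence (N t k v lam : ℕ) (ht : 1 ≤ t) (hk : t ≤ k) (hv : 2 ≤ v)
    (hlam : 1 ≤ lam) (hN : 1 ≤ N) (p : ℝ) (hp : p = 1 / (v : ℝ) ^ t)
    (h : Real.exp 1 * ((k.choose t : ℝ) - ((k - t).choose t : ℝ)) * (v : ℝ) ^ t *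
        ∑ i ∈ Finset.range lam, (N.choose i : ℝ) * p ^ i * (1 - p) ^ (N - i) ≤ 1) :
    ∃ A : Fin N → Fin k → Fin v, IsCA N t k v lam A := by
  classical
  subst hp
  set Ssum : ℝ := ∑ i ∈ Finset.range lam,
      (N.choose i : ℝ) * (1/(v:ℝ)^t)^i * (1 - 1/(v:ℝ)^t)^(N-i) with hSsum
  have hv1 : (1:ℝ) ≤ (v:ℝ) := by exact_mod_cast Nat.one_le_of_lt hv
  have hvt1 : (1:ℝ) ≤ (v:ℝ)^t := one_le_pow₀ hv1
  have hsum0 : 0 ≤ Ssum := by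
    apply Finset.sum_nonneg
    intro i _
    have h1 : (0:ℝ) ≤ 1/(v:ℝ)^t := by positivity
    have h2 : (0:ℝ) ≤ 1 - 1/(v:ℝ)^t := by
      have : 1/(v:ℝ)^t ≤ 1 := by
        rw [div_le_one (by linarith)]; linarith
      linarith
    positivity
  -- index type: t-subsets of columns
  let ιt := {c : Finset (Fin k) // c ∈ Finset.powersetCard t (Finset.univ : Finset (Fin k))}
  have hccard : ∀ c : ιt, c.1.card = t := fun c => (Finset.mem_powersetCard.mp c.2).2
  let A : ιt → Finset (Fin N → Fin k → Fin v) := fun c => BadSet N t k v lam c.1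
  let Γ : ιt → Finset ιt := fun c => Finset.univ.filter (fun c' => ¬ Disjoint c.1 c'.1)
  set D := k.choose t - (k - t).choose t with hD
  have hcardι : Fintype.card ιt = k.choose t := by
    rw [Fintype.card_coe, Finset.card_powersetCard, Finset.card_univ, Fintype.card_fin]
  have hΓcards : ∀ c : ιt, (Γ c).card = D := by
    intro c
    have h1 : Γ c = Finset.univ \ Finset.univ.filter (fun c' : ιt => Disjoint c.1 c'.1) := by
      simp only [Γ, Finset.filter_not]
    have hcompl : ((Finset.univ : Finset (Fin k)) \ c.1).card = k - t := by
      rw [Finset.card_sdiff_of_subset (Finset.subset_univ _), Finset.card_univ, Fintype.card_fin,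
        hccard c]
    have hmapsto : ∀ c' ∈ Finset.univ.filter (fun c' : ιt => Disjoint c.1 c'.1),
        c'.1 ∈ Finset.powersetCard t ((Finset.univ : Finset (Fin k)) \ c.1) := by
      intro c' hc'
      simp only [Finset.mem_filter, Finset.mem_univ, true_and] at hc'
      rw [Finset.mem_powersetCard]
      refine ⟨fun j hj => Finset.mem_sdiff.mpr ⟨Finset.mem_univ j, ?_⟩, hccard c'⟩
      exact Finset.disjoint_right.mp hc' hj
    have hinj : ∀ (a : ιt) (ha : a ∈ Finset.univ.filter (fun c' : ιt => Disjoint c.1 c'.1))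
        (b : ιt) (hb : b ∈ Finset.univ.filter (fun c' : ιt => Disjoint c.1 c'.1)),
        a.1 = b.1 → a = b := fun a _ b _ hab => Subtype.ext hab
    have hsurj : ∀ b ∈ Finset.powersetCard t ((Finset.univ : Finset (Fin k)) \ c.1),
        ∃ a, ∃ (ha : a ∈ Finset.univ.filter (fun c' : ιt => Disjoint c.1 c'.1)), a.1 = b := by
      intro b hb
      rw [Finset.mem_powersetCard] at hb
      obtain ⟨hbsub, hbcard⟩ := hb
      have hbmem : b ∈ Finset.powersetCard t (Finset.univ : Finset (Fin k)) :=
        Finset.mem_powersetCard.mpr ⟨Finset.subset_univ b, hbcard⟩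
      refine ⟨⟨b, hbmem⟩, ?_, rfl⟩
      simp only [Finset.mem_filter, Finset.mem_univ, true_and]
      rw [Finset.disjoint_right]
      intro j hj
      exact (Finset.mem_sdiff.mp (hbsub hj)).2
    have h2 : (Finset.univ.filter (fun c' : ιt => Disjoint c.1 c'.1)).card =
        (k - t).choose t := by
      rw [Finset.card_bij (fun (c' : ιt) _ => c'.1) hmapsto hinj hsurj,
        Finset.card_powersetCard, hcompl]
    rw [h1, Finset.card_sdiff_of_subset (Finset.filter_subset _ _), Finset.card_univ, hcardι, h2]
  have hself : ∀ c : ιt, c ∈ Γ c := by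
    intro c
    simp only [Γ, Finset.mem_filter, Finset.mem_univ, true_and]
    intro hcon
    have hne : c.1.Nonempty := Finset.card_pos.mp (by rw [hccard c]; omega)
    obtain ⟨a, ha⟩ := hne
    exact (Finset.disjoint_left.mp hcon ha) ha
  have hιne : Nonempty ιt := by
    have hne : (Finset.powersetCard t (Finset.univ : Finset (Fin k))).Nonempty := by
      rw [Finset.powersetCard_nonempty]
      simp only [Finset.card_univ, Fintype.card_fin]
      exact hk
    obtain ⟨c₀, hc₀⟩ := hne
    exact ⟨⟨c₀, hc₀⟩⟩
  have hD1 : 1 ≤ D := by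
    obtain ⟨c₀⟩ := hιne
    have := hΓcards c₀
    have hpos : 0 < (Γ c₀).card := Finset.card_pos.mpr ⟨c₀, hself c₀⟩
    omega
  set q : ℝ := (v:ℝ)^t * Ssum with hq'
  have hq0 : 0 ≤ q := by positivity
  have hΩcard : ((Fintype.card (Fin N → Fin k → Fin v)) : ℝ) = ((v:ℝ)^k)^N := by
    rw [Fintype.card_fun, Fintype.card_fun, Fintype.card_fin, Fintype.card_fin,
      Fintype.card_fin]
    push_cast
    ring
  have hq : ∀ c : ιt, ((A c).card : ℝ) ≤ q * Fintype.card (Fin N → Fin k → Fin v) := by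
    intro c
    have h1 : (A c).card ≤ ∑ x : Fin t → Fin v, (BadTuple (s0 c.1 (hccard c)) x N lam).card :=
      (Finset.card_le_card (badSet_subset c.1 (hccard c))).trans Finset.card_biUnion_le
    have h2 : ((A c).card : ℝ) ≤
        ∑ x : Fin t → Fin v, ((BadTuple (s0 c.1 (hccard c)) x N lam).card : ℝ) := by
      exact_mod_cast h1
    refine h2.trans ?_
    have h3 : ∀ x : Fin t → Fin v, ((BadTuple (s0 c.1 (hccard c)) x N lam).card : ℝ) ≤
        Ssum * ((v:ℝ)^k)^N :=
      fun x => badTuple_card_real (s0 c.1 (hccard c)) x (s0_inj c.1 (hccard c)) N lam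
        (by omega) hk
    calc ∑ x : Fin t → Fin v, ((BadTuple (s0 c.1 (hccard c)) x N lam).card : ℝ)
        ≤ ∑ _x : Fin t → Fin v, Ssum * ((v:ℝ)^k)^N := Finset.sum_le_sum (fun x _ => h3 x)
      _ = (Fintype.card (Fin t → Fin v) : ℝ) * (Ssum * ((v:ℝ)^k)^N) := by
          rw [Finset.sum_const, Finset.card_univ, nsmul_eq_mul]
      _ = q * Fintype.card (Fin N → Fin k → Fin v) := by
          rw [Fintype.card_fun, Fintype.card_fin, Fintype.card_fin, hΩcard]
          push_cast
          ring
  have hind : ∀ (c : ιt) (S : Finset ιt), (∀ c' ∈ S, c' ∉ Γ c) →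
      (((A c ∩ LLLGood A S).card : ℝ)) * Fintype.card (Fin N → Fin k → Fin v) =
        (A c).card * (LLLGood A S).card := by
    intro c S hS
    have hdisjS : ∀ c' ∈ S, Disjoint c.1 c'.1 := by
      intro c' hc'
      have := hS c' hc'
      simp only [Γ, Finset.mem_filter, Finset.mem_univ, true_and, not_not] at this
      exact this
    have := cylinder_indep c.1 (A c) (LLLGood A S)
      (fun ω ω' hagree hω => badSet_det c.1 ω ω' (fun r j hj => hagree r j hj) hω)
      (fun ω ω' hagree hω => by
        simp only [LLLGood, Finset.mem_filter, Finset.mem_univ, true_and] at *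
        intro c' hc' hcon
        apply hω c' hc'
        apply badSet_det c'.1 ω' ω _ hcon
        intro r j hj
        exact (hagree r j (Finset.disjoint_right.mp (hdisjS c' hc') hj)).symm)
    exact_mod_cast this
  have hΓcard' : ∀ c : ιt, (Γ c).card ≤ (D - 1) + 1 := by
    intro c; rw [hΓcards c]; omega
  have hlll : Real.exp 1 * q * ((D - 1 : ℕ) + 1) ≤ 1 := by
    have hcast : (((D - 1 : ℕ) : ℝ) + 1) = ((k.choose t : ℝ) - ((k - t).choose t : ℝ)) := by
      have hle : (k - t).choose t ≤ k.choose t := Nat.choose_le_choose t (Nat.sub_le k t)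
      have : ((D : ℕ) : ℝ) = (k.choose t : ℝ) - ((k - t).choose t : ℝ) := by
        rw [hD, Nat.cast_sub hle]
      rw [← this]
      have : ((D - 1 : ℕ) : ℝ) = (D : ℝ) - 1 := by
        rw [Nat.cast_sub hD1]
        simp
      rw [this]
      ring
    rw [hcast]
    calc Real.exp 1 * q * ((k.choose t : ℝ) - ((k - t).choose t : ℝ))
        = Real.exp 1 * ((k.choose t : ℝ) - ((k - t).choose t : ℝ)) * (v:ℝ)^t * Ssum := by
          rw [hq']; ring
      _ ≤ 1 := h
  haveI : Nonempty (Fin N → Fin k → Fin v) := ⟨fun _ _ => ⟨0, by omega⟩⟩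
  obtain ⟨ω, hω⟩ := LLL_counting A Γ (D - 1) q hq0 hself hΓcard' hq hind hlll
  refine ⟨ω, ?_⟩
  intro s hs x
  by_contra hcon
  push_neg at hcon
  have hcmem : Finset.image s Finset.univ ∈
      Finset.powersetCard t (Finset.univ : Finset (Fin k)) := by
    rw [Finset.mem_powersetCard]
    refine ⟨Finset.subset_univ _, ?_⟩
    rw [Finset.card_image_of_injective _ hs, Finset.card_univ, Fintype.card_fin]
  apply hω ⟨Finset.image s Finset.univ, hcmem⟩
  simp only [A, BadSet, Finset.mem_filter, Finset.mem_univ, true_and]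
  exact ⟨s, hs, fun i => Finset.mem_image.mpr ⟨i, Finset.mem_univ i, rfl⟩, x, hcon⟩
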